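/- For any vertex set S and hop parameter h ∈ ℕ, the potential φ(v) = d^h(S,v) (the h-hop distance from the set S to v) is a valid potential: every edge e=(u,v) with ℓ(e) ≥ 0 satisfies ℓ(e) + d^h(S,u) − d^h(S,v) ≥ 0. -/
import Mathlib


open Classical

variable {V : Type*}

/-- `IsWalk E s t p`: `p` is the list of successive vertices (after `s`) of a walk
from `s` to `t` in the directed graph with edge relation `E`. -/
def IsWalk (E : V → V → Prop) : V → V → List V → Prop
  | s, t, [] => s = t
  | s, t, v :: p => E s v ∧ IsWalk E v t p

/-- Length of a walk: sum of edge lengths. -/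
noncomputable def walkLen (ℓ : V → V → ℝ) : V → List V → ℝ
  | _, [] => 0
  | s, v :: p => ℓ s v + walkLen ℓ v p

/-- Number of hops of a walk: number of designated (negative) edges, with multiplicity. -/
noncomputable def hopCount (neg : V → V → Prop) : V → List V → ℕ
  | _, [] => 0
  | s, v :: p => (if neg s v then 1 else 0) + hopCount neg v p

/-- `h`-hop distance: infimum length over walks from `s` to `t` with at most `h` hops. -/
noncomputable def hopDist (E : V → V → Prop) (ℓ : V → V → ℝ) (neg : V → V → Prop)
    (h : ℕ) (s t : V) : EReal :=
  ⨅ p ∈ {p : List V | IsWalk E s t p ∧ hopCount neg s p ≤ h}, (walkLen ℓ s p : EReal)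

/-- Distance: infimum length over all walks from `s` to `t`. -/
noncomputable def walkDist (E : V → V → Prop) (ℓ : V → V → ℝ) (s t : V) : EReal :=
  ⨅ p ∈ {p : List V | IsWalk E s t p}, (walkLen ℓ s p : EReal)

lemma isWalk_append {E : V → V → Prop} {s u v : V} {p : List V}
    (hp : IsWalk E s u p) (huv : E u v) : IsWalk E s v (p ++ [v]) := by
  induction p generalizing s with
  | nil => cases hp; exact ⟨huv, rfl⟩
  | cons a q ih => exact ⟨hp.1, ih hp.2⟩

lemma walkLen_append {E : V → V → Prop} {ℓ : V → V → ℝ} {s u v : V} {p : List V}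
    (hp : IsWalk E s u p) : walkLen ℓ s (p ++ [v]) = walkLen ℓ s p + ℓ u v := by
  induction p generalizing s with
  | nil => cases hp; simp [walkLen]
  | cons a q ih => simp [walkLen, ih hp.2]; ring

lemma hopCount_append {E : V → V → Prop} {neg : V → V → Prop} {s u v : V} {p : List V}
    (hp : IsWalk E s u p) :
    hopCount neg s (p ++ [v]) = hopCount neg s p + (if neg u v then 1 else 0) := by
  induction p generalizing s with
  | nil => cases hp; simp [hopCount]
  | cons a q ih => simp [hopCount, ih hp.2]; ring

/-- For any vertex set `S` and `h ∈ ℕ`, the potential `φ(v) = d^h(S,v)` (assumed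
finite, with real values `D v`) is valid: every nonnegative edge stays nonnegative. -/
theorem hopDist_from_set_valid_potential
    {V : Type*} (E : V → V → Prop) (ℓ : V → V → ℝ) (S : Set V) (h : ℕ) (D : V → ℝ)
    (hD : ∀ v : V, (⨅ s ∈ S, hopDist E ℓ (fun u v => ℓ u v < 0) h s v) = (D v : EReal)) :
    ∀ u v, E u v → 0 ≤ ℓ u v → 0 ≤ ℓ u v + D u - D v := by
  intro u v huv hℓ
  have key : ∀ ε : ℝ, 0 < ε → D v ≤ D u + ℓ u v + ε := by
    intro ε hε
    have h1 : (⨅ s ∈ S, hopDist E ℓ (fun u v => ℓ u v < 0) h s u) < (D u + ε : ℝ) := by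
      rw [hD u]; exact_mod_cast (by linarith : D u < D u + ε)
    obtain ⟨s, hs⟩ := iInf_lt_iff.mp h1
    obtain ⟨hsS, hs⟩ := iInf_lt_iff.mp hs
    rw [hopDist] at hs
    obtain ⟨p, hp⟩ := iInf_lt_iff.mp hs
    obtain ⟨⟨hwalk, hhop⟩, hlen⟩ := iInf_lt_iff.mp hp
    have hlenR : walkLen ℓ s p < D u + ε := by exact_mod_cast hlen
    have hmem : (p ++ [v]) ∈ {q : List V | IsWalk E s v q ∧
        hopCount (fun a b => ℓ a b < 0) s q ≤ h} := by
      refine ⟨isWalk_append hwalk huv, ?_⟩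
      rw [hopCount_append hwalk]
      simp [not_lt.mpr hℓ]
      exact hhop
    have h2 : (D v : EReal) ≤ walkLen ℓ s (p ++ [v]) := by
      rw [← hD v]
      refine le_trans (iInf₂_le s hsS) ?_
      exact iInf₂_le (p ++ [v]) hmem
    have h3 : (D v : EReal) ≤ (walkLen ℓ s p + ℓ u v : ℝ) := by
      rwa [walkLen_append hwalk] at h2
    have h4 : D v ≤ walkLen ℓ s p + ℓ u v := by exact_mod_cast h3
    linarith
  linarith [le_of_forall_pos_le_add key]
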